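/- Fix 𝔸 = (A₁, …, Aₙ) ∈ ℙ_dⁿ and for each p ∈ (1, 2] let M_p denote the unique minimizer of F_p(·; 𝔸). Then the family {M_p}_{p ∈ (1,2]} is bounded in (ℙ_d, δ): there exists R > 0 such that δ(M_p, I) ≤ R for all p ∈ (1, 2]. -/

import Mathlib

noncomputable section

open Matrix
open scoped ComplexOrder

/-- Real functional calculus of a matrix, via the Hermitian eigendecomposition
(junk value `0` if the matrix is not Hermitian). -/
noncomputable def fcal {d : ℕ} (f : ℝ → ℝ) (A : Matrix (Fin d) (Fin d) ℂ) :
    Matrix (Fin d) (Fin d) ℂ :=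
  if hA : A.IsHermitian then hA.cfc f else 0

/-- Matrix logarithm of a positive-definite matrix (functional calculus). -/
noncomputable def mlog {d : ℕ} (A : Matrix (Fin d) (Fin d) ℂ) : Matrix (Fin d) (Fin d) ℂ :=
  fcal Real.log A

/-- Real power of a positive-definite matrix (functional calculus). -/
noncomputable def mpow {d : ℕ} (A : Matrix (Fin d) (Fin d) ℂ) (t : ℝ) :
    Matrix (Fin d) (Fin d) ℂ :=
  fcal (fun x => x ^ t) A

/-- Frobenius (Hilbert–Schmidt) norm of a matrix. -/
noncomputable def hsNorm {d : ℕ} (A : Matrix (Fin d) (Fin d) ℂ) : ℝ :=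
  Real.sqrt (∑ i, ∑ j, ‖A i j‖ ^ 2)

/-- The Riemannian trace-metric distance δ(A, B) = ‖log (A^{-1/2} B A^{-1/2})‖_HS. -/
noncomputable def rdist {d : ℕ} (A B : Matrix (Fin d) (Fin d) ℂ) : ℝ :=
  hsNorm (mlog (mpow A (-(1 / 2 : ℝ)) * B * mpow A (-(1 / 2 : ℝ))))

/-- The t-weighted geometric mean A #_t B = A^{1/2} (A^{-1/2} B A^{-1/2})^t A^{1/2}. -/
noncomputable def gmean {d : ℕ} (A B : Matrix (Fin d) (Fin d) ℂ) (t : ℝ) :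
    Matrix (Fin d) (Fin d) ℂ :=
  mpow A (1 / 2 : ℝ) * mpow (mpow A (-(1 / 2 : ℝ)) * B * mpow A (-(1 / 2 : ℝ))) t *
    mpow A (1 / 2 : ℝ)

/-- The objective function F_p(X; 𝔸) = (1/n) ∑ₖ δ(X, Aₖ)^p. -/
noncomputable def Fobj {d n : ℕ} (p : ℝ) (A : Fin n → Matrix (Fin d) (Fin d) ℂ)
    (X : Matrix (Fin d) (Fin d) ℂ) : ℝ :=
  (1 / (n : ℝ)) * ∑ k, rdist X (A k) ^ p

/-!
Comparing `F_p(M_p)` with `F_p(A₁)` bounds `δ(M_p, A₁)^p` by `∑ₖ δ(A₁, Aₖ)^p`, hence `δ(M_p, A₁)`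
uniformly in `p ∈ (1, 2]`. To move from `A₁` to `I`, a quasi-triangle inequality
`δ(X, Y) ≤ √d (δ(X, A) + δ(A, Y))` replaces the triangle inequality: `δ(X, Y) ≤ r` gives the
Loewner sandwich `e^{-r} X ≤ Y ≤ e^r X`, such sandwiches compose multiplicatively, and a sandwich
with constant `e^c` puts every eigenvalue of `X^{-1/2} Y X^{-1/2}` in `[e^{-c}, e^c]`, so that
`δ(X, Y) ≤ √d c`.
-/

open scoped MatrixOrder

namespace Matrix

variable {ι 𝕜 : Type*} [Fintype ι] [RCLike 𝕜]

lemma sum_sq_norm_eq_re_trace (M : Matrix ι ι 𝕜) :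
    ∑ i, ∑ j, ‖M i j‖ ^ 2 = RCLike.re (Mᴴ * M).trace := by
  simp only [trace, diag_apply, mul_apply, conjTranspose_apply, map_sum, RCLike.star_def,
    RCLike.conj_mul, ← RCLike.ofReal_pow, RCLike.ofReal_re]
  exact Finset.sum_comm

variable [DecidableEq ι]

@[fun_prop]
lemma continuousOn_spectrum (f : ℝ → ℝ) (A : Matrix ι ι 𝕜) : ContinuousOn f (spectrum ℝ A) :=
  A.finite_real_spectrum.continuousOn f

lemma IsHermitian.trace_cfc {A : Matrix ι ι 𝕜} (hA : A.IsHermitian) (f : ℝ → ℝ) :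
    (cfc f A).trace = ∑ i, (f (hA.eigenvalues i) : 𝕜) := by
  rw [hA.cfc_eq, IsHermitian.cfc, Unitary.conjStarAlgAut_apply, trace_mul_cycle,
    Unitary.coe_star_mul_self, one_mul, trace_diagonal]
  rfl

end Matrix

section HilbertSchmidt

variable {d : ℕ} {A : Matrix (Fin d) (Fin d) ℂ}

lemma hsNorm_cfc (hA : A.IsHermitian) (f : ℝ → ℝ) :
    hsNorm (cfc f A) = √(∑ i, f (hA.eigenvalues i) ^ 2) := by
  have hself : (cfc f A)ᴴ = cfc f A := (cfc_predicate f A).star_eq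
  rw [hsNorm, sum_sq_norm_eq_re_trace, hself, ← cfc_mul, hA.trace_cfc, map_sum]
  simp only [RCLike.ofReal_re, sq]

lemma abs_le_hsNorm_cfc (hA : A.IsHermitian) (f : ℝ → ℝ) {x : ℝ} (hx : x ∈ spectrum ℝ A) :
    |f x| ≤ hsNorm (cfc f A) := by
  obtain ⟨i, rfl⟩ := hA.spectrum_real_eq_range_eigenvalues ▸ hx
  rw [hsNorm_cfc hA, ← Real.sqrt_sq_eq_abs]
  exact Real.sqrt_le_sqrt (Finset.single_le_sum (fun j _ => sq_nonneg (f (hA.eigenvalues j)))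
    (Finset.mem_univ i))

lemma hsNorm_cfc_le (hA : A.IsHermitian) (f : ℝ → ℝ) {c : ℝ} (hc : 0 ≤ c)
    (h : ∀ x ∈ spectrum ℝ A, |f x| ≤ c) : hsNorm (cfc f A) ≤ √d * c := by
  have hsq (i : Fin d) : f (hA.eigenvalues i) ^ 2 ≤ c ^ 2 :=
    sq_le_sq' (abs_le.1 (h _ (hA.eigenvalues_mem_spectrum_real i))).1
      (abs_le.1 (h _ (hA.eigenvalues_mem_spectrum_real i))).2
  calc hsNorm (cfc f A) ≤ √(∑ _i : Fin d, c ^ 2) :=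
        hsNorm_cfc hA f ▸ Real.sqrt_le_sqrt (Finset.sum_le_sum fun i _ => hsq i)
    _ = √d * c := by simp [Real.sqrt_mul (Nat.cast_nonneg d), Real.sqrt_sq hc]

end HilbertSchmidt

section MatrixPower

variable {d : ℕ} {X : Matrix (Fin d) (Fin d) ℂ}

lemma fcal_eq_cfc (f : ℝ → ℝ) (A : Matrix (Fin d) (Fin d) ℂ) : fcal f A = cfc f A := by
  unfold fcal
  split_ifs with hA
  · exact (hA.cfc_eq f).symm
  · exact (cfc_apply_of_not_predicate A hA).symm

lemma mpow_eq_cfc (X : Matrix (Fin d) (Fin d) ℂ) (t : ℝ) :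
    mpow X t = cfc (fun x : ℝ => x ^ t) X :=
  fcal_eq_cfc _ X

lemma mlog_eq_cfc (X : Matrix (Fin d) (Fin d) ℂ) : mlog X = cfc Real.log X :=
  fcal_eq_cfc _ X

lemma isSelfAdjoint_mpow (X : Matrix (Fin d) (Fin d) ℂ) (t : ℝ) : IsSelfAdjoint (mpow X t) :=
  mpow_eq_cfc X t ▸ cfc_predicate _ X

lemma mpow_mul_mpow (hX : X.PosDef) (s t : ℝ) : mpow X s * mpow X t = mpow X (s + t) := by
  simp only [mpow_eq_cfc]
  rw [← cfc_mul]
  exact cfc_congr fun x hx => (Real.rpow_add (hX.isStrictlyPositive.spectrum_pos hx) s t).symm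

lemma mpow_zero (hX : X.IsHermitian) : mpow X 0 = 1 := by
  simp only [mpow_eq_cfc, Real.rpow_zero]
  exact cfc_const_one ℝ X

lemma mpow_one (hX : X.IsHermitian) : mpow X 1 = X := by
  simp only [mpow_eq_cfc, Real.rpow_one]
  exact cfc_id' ℝ X

lemma mpow_half_mul_mpow_neg_half (hX : X.PosDef) : mpow X (1 / 2) * mpow X (-(1 / 2)) = 1 := by
  rw [mpow_mul_mpow hX, add_neg_cancel, mpow_zero hX.1]

lemma mpow_neg_half_mul_mpow_half (hX : X.PosDef) : mpow X (-(1 / 2)) * mpow X (1 / 2) = 1 := by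
  rw [mpow_mul_mpow hX, neg_add_cancel, mpow_zero hX.1]

lemma mpow_half_mul_mpow_half (hX : X.PosDef) : mpow X (1 / 2) * mpow X (1 / 2) = X := by
  rw [mpow_mul_mpow hX, add_halves, mpow_one hX.1]

lemma mpow_half_mul_algebraMap_mul_mpow_half (hX : X.PosDef) (r : ℝ) :
    mpow X (1 / 2) * algebraMap ℝ _ r * mpow X (1 / 2) = r • X := by
  rw [Algebra.algebraMap_eq_smul_one, mul_smul_comm, smul_mul_assoc, mul_one,
    mpow_half_mul_mpow_half hX]

lemma mpow_neg_half_mul_smul_mul_mpow_neg_half (hX : X.PosDef) (r : ℝ) :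
    mpow X (-(1 / 2)) * (r • X) * mpow X (-(1 / 2)) = algebraMap ℝ _ r := by
  calc mpow X (-(1 / 2)) * (r • X) * mpow X (-(1 / 2))
      = r • (mpow X (-(1 / 2)) * (mpow X (1 / 2) * mpow X (1 / 2)) * mpow X (-(1 / 2))) := by
        rw [mpow_half_mul_mpow_half hX, mul_smul_comm, smul_mul_assoc]
    _ = r • ((mpow X (-(1 / 2)) * mpow X (1 / 2)) * (mpow X (1 / 2) * mpow X (-(1 / 2)))) := by
        simp only [mul_assoc]
    _ = algebraMap ℝ _ r := by
        rw [mpow_neg_half_mul_mpow_half hX, mpow_half_mul_mpow_neg_half hX, one_mul,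
          Algebra.algebraMap_eq_smul_one]

lemma mpow_half_mul_mul_mpow_half (hX : X.PosDef) (Y : Matrix (Fin d) (Fin d) ℂ) :
    mpow X (1 / 2) * (mpow X (-(1 / 2)) * Y * mpow X (-(1 / 2))) * mpow X (1 / 2) = Y := by
  simp only [← mul_assoc, mpow_half_mul_mpow_neg_half hX, one_mul]
  rw [mul_assoc, mpow_neg_half_mul_mpow_half hX, mul_one]

lemma posDef_mpow_neg_half_mul_mul (hX : X.PosDef) {Y : Matrix (Fin d) (Fin d) ℂ}
    (hY : Y.PosDef) : (mpow X (-(1 / 2)) * Y * mpow X (-(1 / 2))).PosDef := by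
  have hunit : IsUnit (mpow X (-(1 / 2))) :=
    (Units.mk (mpow X (-(1 / 2))) (mpow X (1 / 2)) (mpow_neg_half_mul_mpow_half hX)
      (mpow_half_mul_mpow_neg_half hX)).isUnit
  have h := hY.conjTranspose_mul_mul_same (Matrix.mulVec_injective_iff_isUnit.2 hunit)
  rwa [← Matrix.star_eq_conjTranspose, (isSelfAdjoint_mpow X _).star_eq] at h

end MatrixPower

section Loewner

open Real

variable {d : ℕ} {X Y A : Matrix (Fin d) (Fin d) ℂ}

lemma rdist_nonneg (X Y : Matrix (Fin d) (Fin d) ℂ) : 0 ≤ rdist X Y :=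
  sqrt_nonneg _

lemma mem_Icc_exp_rdist_of_mem_spectrum (hX : X.PosDef) (hY : Y.PosDef) {μ : ℝ}
    (hμ : μ ∈ spectrum ℝ (mpow X (-(1 / 2)) * Y * mpow X (-(1 / 2)))) :
    μ ∈ Set.Icc (exp (-rdist X Y)) (exp (rdist X Y)) := by
  have hM := posDef_mpow_neg_half_mul_mul hX hY
  have hlog : |log μ| ≤ rdist X Y := by
    rw [rdist, mlog_eq_cfc]
    exact abs_le_hsNorm_cfc hM.1 log hμ
  rw [← exp_log (hM.isStrictlyPositive.spectrum_pos hμ)]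
  exact ⟨exp_le_exp.2 (neg_le_of_abs_le hlog), exp_le_exp.2 (le_of_abs_le hlog)⟩

lemma exp_neg_rdist_smul_le_and_le_exp_rdist_smul (hX : X.PosDef) (hY : Y.PosDef) :
    exp (-rdist X Y) • X ≤ Y ∧ Y ≤ exp (rdist X Y) • X := by
  have hM : IsSelfAdjoint (mpow X (-(1 / 2)) * Y * mpow X (-(1 / 2))) :=
    (posDef_mpow_neg_half_mul_mul hX hY).1
  have hS := isSelfAdjoint_mpow X (1 / 2)
  have hlow : algebraMap ℝ _ (exp (-rdist X Y)) ≤ mpow X (-(1 / 2)) * Y * mpow X (-(1 / 2)) :=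
    (algebraMap_le_iff_le_spectrum hM).2 fun μ hμ => (mem_Icc_exp_rdist_of_mem_spectrum hX hY hμ).1
  have hup : mpow X (-(1 / 2)) * Y * mpow X (-(1 / 2)) ≤ algebraMap ℝ _ (exp (rdist X Y)) :=
    (le_algebraMap_iff_spectrum_le hM).2 fun μ hμ => (mem_Icc_exp_rdist_of_mem_spectrum hX hY hμ).2
  constructor
  · simpa only [mpow_half_mul_algebraMap_mul_mpow_half hX, mpow_half_mul_mul_mpow_half hX]
      using hS.conjugate_le_conjugate hlow
  · simpa only [mpow_half_mul_algebraMap_mul_mpow_half hX, mpow_half_mul_mul_mpow_half hX]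
      using hS.conjugate_le_conjugate hup

lemma rdist_le_of_smul_le_of_le_smul (hX : X.PosDef) {c : ℝ} (hc : 0 ≤ c)
    (hlow : exp (-c) • X ≤ Y) (hup : Y ≤ exp c • X) : rdist X Y ≤ √d * c := by
  have hT := isSelfAdjoint_mpow X (-(1 / 2))
  have hlow' := hT.conjugate_le_conjugate hlow
  have hup' := hT.conjugate_le_conjugate hup
  rw [mpow_neg_half_mul_smul_mul_mpow_neg_half hX] at hlow' hup'
  have hM : IsSelfAdjoint (mpow X (-(1 / 2)) * Y * mpow X (-(1 / 2))) := by
    simpa using (IsSelfAdjoint.of_nonneg (sub_nonneg.2 hlow')).add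
      (IsSelfAdjoint.algebraMap (Matrix (Fin d) (Fin d) ℂ) (.all (exp (-c))))
  have hspec : ∀ μ ∈ spectrum ℝ (mpow X (-(1 / 2)) * Y * mpow X (-(1 / 2))), |log μ| ≤ c := by
    intro μ hμ
    have h₁ := (algebraMap_le_iff_le_spectrum hM).1 hlow' μ hμ
    have h₂ := (le_algebraMap_iff_spectrum_le hM).1 hup' μ hμ
    have hμ0 : 0 < μ := (exp_pos _).trans_le h₁
    rw [abs_le, le_log_iff_exp_le hμ0, log_le_iff_le_exp hμ0]
    exact ⟨h₁, h₂⟩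
  rw [rdist, mlog_eq_cfc]
  exact hsNorm_cfc_le hM log hc hspec

lemma rdist_le_sqrt_mul_rdist_add_rdist (hX : X.PosDef) (hA : A.PosDef) (hY : Y.PosDef) :
    rdist X Y ≤ √d * (rdist X A + rdist A Y) := by
  obtain ⟨hXA, hAX⟩ := exp_neg_rdist_smul_le_and_le_exp_rdist_smul hX hA
  obtain ⟨hAY, hYA⟩ := exp_neg_rdist_smul_le_and_le_exp_rdist_smul hA hY
  refine rdist_le_of_smul_le_of_le_smul hX (add_nonneg (rdist_nonneg X A) (rdist_nonneg A Y))
    ?_ ?_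
  · calc exp (-(rdist X A + rdist A Y)) • X = exp (-rdist A Y) • exp (-rdist X A) • X := by
          rw [smul_smul, ← exp_add, neg_add, add_comm]
      _ ≤ exp (-rdist A Y) • A := smul_le_smul_of_nonneg_left hXA (exp_pos _).le
      _ ≤ Y := hAY
  · calc Y ≤ exp (rdist A Y) • A := hYA
      _ ≤ exp (rdist A Y) • exp (rdist X A) • X := smul_le_smul_of_nonneg_left hAX (exp_pos _).le
      _ = exp (rdist X A + rdist A Y) • X := by rw [smul_smul, ← exp_add, add_comm]

end Loewner

section Minimizer

open Real

lemma le_one_add_rpow {x p : ℝ} (hx : 0 ≤ x) (hp : 1 ≤ p) : x ≤ 1 + x ^ p := by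
  rcases le_or_gt x 1 with hx1 | hx1
  · linarith [rpow_nonneg hx p]
  · linarith [self_le_rpow_of_one_le hx1.le hp]

lemma rpow_le_one_add_sq {x p : ℝ} (hx : 0 ≤ x) (hp₀ : 0 ≤ p) (hp₂ : p ≤ 2) :
    x ^ p ≤ (1 + x) ^ 2 :=
  calc x ^ p ≤ (1 + x) ^ p := rpow_le_rpow hx (by linarith) hp₀
    _ ≤ (1 + x) ^ (2 : ℝ) := rpow_le_rpow_of_exponent_le (by linarith) hp₂
    _ = (1 + x) ^ 2 := rpow_two _

lemma rdist_le_of_Fobj_le {d n : ℕ} {p : ℝ} (hp : p ∈ Set.Ioc (1 : ℝ) 2)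
    {A : Fin n → Matrix (Fin d) (Fin d) ℂ} {X : Matrix (Fin d) (Fin d) ℂ} (k : Fin n)
    (hX : Fobj p A X ≤ Fobj p A (A k)) :
    rdist X (A k) ≤ 1 + ∑ j, (1 + rdist (A k) (A j)) ^ 2 := by
  unfold Fobj at hX
  have hsum : ∑ j, rdist X (A j) ^ p ≤ ∑ j, rdist (A k) (A j) ^ p :=
    le_of_mul_le_mul_left hX (by have := k.pos; positivity)
  calc rdist X (A k) ≤ 1 + rdist X (A k) ^ p := le_one_add_rpow (rdist_nonneg _ _) hp.1.le
    _ ≤ 1 + ∑ j, rdist X (A j) ^ p := by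
        gcongr
        exact Finset.single_le_sum (fun j _ => rpow_nonneg (rdist_nonneg _ _) p)
          (Finset.mem_univ k)
    _ ≤ 1 + ∑ j, rdist (A k) (A j) ^ p := add_le_add_right hsum 1
    _ ≤ 1 + ∑ j, (1 + rdist (A k) (A j)) ^ 2 := by
        gcongr with j
        exact rpow_le_one_add_sq (rdist_nonneg _ _) (by linarith [hp.1]) hp.2

end Minimizer

/-- the family of minimizers {M_p}_{p ∈ (1,2]} is bounded in (ℙ_d, δ). -/
theorem stmt8 {d n : ℕ} (hn : 0 < n) (A : Fin n → Matrix (Fin d) (Fin d) ℂ)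
    (hA : ∀ k, (A k).PosDef)
    (Mp : ℝ → Matrix (Fin d) (Fin d) ℂ)
    (hMp : ∀ p ∈ Set.Ioc (1 : ℝ) 2, (Mp p).PosDef ∧
      ∀ X : Matrix (Fin d) (Fin d) ℂ, X.PosDef → Fobj p A (Mp p) ≤ Fobj p A X) :
    ∃ R > (0 : ℝ), ∀ p ∈ Set.Ioc (1 : ℝ) 2, rdist (Mp p) 1 ≤ R := by
  obtain ⟨k⟩ : Nonempty (Fin n) := ⟨⟨0, hn⟩⟩
  set C := 1 + ∑ j, (1 + rdist (A k) (A j)) ^ 2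
  have hR : 0 ≤ √d * (C + rdist (A k) 1) :=
    mul_nonneg (Real.sqrt_nonneg _) (add_nonneg (by positivity) (rdist_nonneg _ _))
  refine ⟨1 + √d * (C + rdist (A k) 1), by linarith, fun p hp => ?_⟩
  obtain ⟨hMpd, hmin⟩ := hMp p hp
  calc rdist (Mp p) 1 ≤ √d * (rdist (Mp p) (A k) + rdist (A k) 1) :=
        rdist_le_sqrt_mul_rdist_add_rdist hMpd (hA k) Matrix.PosDef.one
    _ ≤ √d * (C + rdist (A k) 1) := by
        gcongr
        exact rdist_le_of_Fobj_le hp k (hmin _ (hA k))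
    _ ≤ 1 + √d * (C + rdist (A k) 1) := le_add_of_nonneg_left zero_le_one
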